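/- Let X_1, X_2, … be independent identically distributed real random variables with cumulative distribution function F, let p ∈ (0, 1), and let q_p ∈ ℝ be such that for every ε > 0, F(q_p − ε) < p and F(q_p + ε) > p (i.e., q_p is the unique p-quantile of F). Define the empirical p-quantile q̂_m as the ⌈pm⌉-th order statistic of X_1, …, X_m. Then q̂_m → q_p almost surely as m → ∞. -/

import Mathlib

open MeasureTheory ProbabilityTheory Filter

/-- The sample `v : Fin m → ℝ` sorted into a nondecreasing list. -/
noncomputable def sortedSample {m : ℕ} (v : Fin m → ℝ) : List ℝ :=
  Multiset.sort (Multiset.map v Finset.univ.val) (· ≤ ·)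

/-- The empirical `p`-quantile of the sample `v`: its `⌈p·m⌉`-th order
statistic (1-based), i.e. entry `⌈p·m⌉ − 1` of the sorted sample. -/
noncomputable def empQuantile (p : ℝ) {m : ℕ} (v : Fin m → ℝ) : ℝ :=
  (sortedSample v).getD (⌈p * m⌉₊ - 1) 0

/-! The order statistic of rank `⌈p m⌉` is at most `x` exactly when at least `p m` sample points
are at most `x`, i.e. when the empirical distribution function satisfies `F_m x ≥ p`. By the strong
law of large numbers for the indicators of `{X_i ≤ r}`, almost surely `F_m r → F r` simultaneously
for all rational `r`. For rationals `r < q_p < r'` we have `F r < p < F r'`, so eventually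
`F_m r < p ≤ F_m r'`, which traps the empirical quantile in `(r, r']`. -/

open Finset Topology

theorem List.Pairwise.getElem_le_iff_lt_countP {α : Type*} [LinearOrder α] {l : List α}
    (hl : l.Pairwise (· ≤ ·)) (x : α) {j : ℕ} (hj : j < l.length) :
    l[j] ≤ x ↔ j < l.countP (· ≤ x) := by
  induction l generalizing j with
  | nil => simp at hj
  | cons a l ih =>
    rw [List.pairwise_cons] at hl
    cases j with
    | zero =>
      by_cases ha : a ≤ x
      · simp [ha]
      · have : l.countP (· ≤ x) = 0 := List.countP_eq_zero.2 fun b hb hbx =>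
          ha ((hl.1 b hb).trans (by simpa using hbx))
        simp [ha, this]
    | succ j =>
      have hj' : j < l.length := by simpa using hj
      have ha_le := hl.1 _ (List.getElem_mem hj')
      rw [List.getElem_cons_succ, ih hl.2 hj', List.countP_cons]
      -- when `l[j] ≤ x`, also `a ≤ x`, so the head adds one to the count
      grind

lemma length_sortedSample {m : ℕ} (v : Fin m → ℝ) : (sortedSample v).length = m := by
  simp [sortedSample]

lemma pairwise_sortedSample {m : ℕ} (v : Fin m → ℝ) : (sortedSample v).Pairwise (· ≤ ·) :=
  Multiset.pairwise_sort _ _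

lemma countP_sortedSample {m : ℕ} (v : Fin m → ℝ) (x : ℝ) :
    (sortedSample v).countP (· ≤ x) = #{i | v i ≤ x} := by
  rw [← Multiset.coe_countP, sortedSample, Multiset.sort_eq, Multiset.countP_map]
  rfl

noncomputable def empCDF {m : ℕ} (v : Fin m → ℝ) (x : ℝ) : ℝ := #{i | v i ≤ x} / m

theorem empQuantile_le_iff {p : ℝ} (hp : 0 < p) (hp1 : p ≤ 1) {m : ℕ} (hm : 0 < m)
    (v : Fin m → ℝ) (x : ℝ) : empQuantile p v ≤ x ↔ p ≤ empCDF v x := by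
  have hm' : (0 : ℝ) < m := Nat.cast_pos.2 hm
  have hk : 0 < ⌈p * m⌉₊ := Nat.ceil_pos.2 (by positivity)
  have hkm : ⌈p * m⌉₊ - 1 < (sortedSample v).length := by
    rw [length_sortedSample]
    have : ⌈p * m⌉₊ ≤ m := Nat.ceil_le.2 (by nlinarith)
    omega
  rw [empQuantile, List.getD_eq_getElem _ _ hkm,
    (pairwise_sortedSample v).getElem_le_iff_lt_countP, countP_sortedSample,
    Nat.lt_iff_add_one_le, Nat.sub_add_cancel hk, Nat.ceil_le, empCDF, le_div_iff₀ hm']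

theorem tendsto_empQuantile_of_tendsto_empCDF {x : ℕ → ℝ} {G : ℝ → ℝ} {p q : ℝ}
    (hp : 0 < p) (hp1 : p ≤ 1) (hG : ∀ ε : ℝ, 0 < ε → G (q - ε) < p ∧ p < G (q + ε))
    (hx : ∀ r : ℚ, Tendsto (fun m : ℕ => empCDF (fun i : Fin m => x i) r) atTop (𝓝 (G r))) :
    Tendsto (fun m : ℕ => empQuantile p (fun i : Fin m => x i)) atTop (𝓝 q) := by
  refine tendsto_order.2 ⟨fun a ha => ?_, fun b hb => ?_⟩
  · obtain ⟨r, har, hrq⟩ := exists_rat_btwn ha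
    have hGr : G r < p := by simpa using (hG (q - r) (sub_pos.2 hrq)).1
    filter_upwards [(hx r).eventually (eventually_lt_nhds hGr), eventually_gt_atTop 0]
      with m hlt hm
    exact har.trans (not_le.1 fun hle => ((empQuantile_le_iff hp hp1 hm _ _).1 hle).not_gt hlt)
  · obtain ⟨r, hqr, hrb⟩ := exists_rat_btwn hb
    have hGr : p < G r := by simpa using (hG (r - q) (sub_pos.2 hqr)).2
    filter_upwards [(hx r).eventually (eventually_gt_nhds hGr), eventually_gt_atTop 0]
      with m hlt hm
    exact ((empQuantile_le_iff hp hp1 hm _ _).2 hlt.le).trans_lt hrb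

theorem ae_tendsto_card_filter_mem_div {Ω E : Type*} [MeasurableSpace Ω] [MeasurableSpace E]
    {P : Measure Ω} [IsFiniteMeasure P] {X : ℕ → Ω → E}
    (hindep : Pairwise fun i j => IndepFun (X i) (X j) P)
    (hident : ∀ i, IdentDistrib (X i) (X 0) P P) {s : Set E} [DecidablePred (· ∈ s)]
    (hs : MeasurableSet s) :
    ∀ᵐ ω ∂P, Tendsto (fun m : ℕ => (#{i : Fin m | X i ω ∈ s} : ℝ) / m) atTop
      (𝓝 (P.real (X 0 ⁻¹' s))) := by
  have hf : Measurable (s.indicator (1 : E → ℝ)) := measurable_one.indicator hs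
  have hnull : NullMeasurableSet (X 0 ⁻¹' s) P :=
    (hident 0).aemeasurable_fst.nullMeasurableSet_preimage hs
  have hY : s.indicator 1 ∘ X 0 = (X 0 ⁻¹' s).indicator (1 : Ω → ℝ) := by
    ext ω; exact (Set.indicator_comp_right (X 0)).symm
  have hint : Integrable (s.indicator 1 ∘ X 0) P := hY ▸ (integrable_const 1).indicator₀ hnull
  have hmean : P[s.indicator 1 ∘ X 0] = P.real (X 0 ⁻¹' s) := by
    rw [hY, integral_indicator₀ hnull]
    simp
  have hsum (ω : Ω) (m : ℕ) :
      ∑ i ∈ range m, (s.indicator 1 ∘ X i) ω = (#{i : Fin m | X i ω ∈ s} : ℝ) := by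
    rw [← Fin.sum_univ_eq_sum_range (fun i => (s.indicator 1 ∘ X i) ω), natCast_card_filter]
    simp [Set.indicator_apply]
  simpa only [hsum, hmean] using strong_law_ae_real (fun i => s.indicator 1 ∘ X i) hint
    (fun i j hij => (hindep hij).comp hf hf) (fun i => (hident i).comp hf)

/-- strong consistency of the empirical quantile: for i.i.d.
real random variables with cdf `F` and a point `qp` with `F(qp − ε) < p` and
`F(qp + ε) > p` for all `ε > 0` (a unique `p`-quantile), the `⌈pm⌉`-th order
statistic of `X_1, …, X_m` converges to `qp` almost surely. -/
theorem empirical_quantile_strong_consistency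
    {Ω : Type*} [MeasurableSpace Ω] (P : Measure Ω) [IsProbabilityMeasure P]
    (X : ℕ → Ω → ℝ) (hmeas : ∀ i, Measurable (X i))
    (hindep : iIndepFun X P)
    (hident : ∀ i, Measure.map (X i) P = Measure.map (X 0) P)
    (F : ℝ → ℝ) (hF : ∀ x, F x = (P {ω | X 0 ω ≤ x}).toReal)
    (p : ℝ) (hp : 0 < p) (hp1 : p < 1)
    (qp : ℝ) (hqp : ∀ ε : ℝ, 0 < ε → F (qp - ε) < p ∧ p < F (qp + ε)) :
    ∀ᵐ ω ∂P, Tendsto (fun m : ℕ => empQuantile p (fun i : Fin m => X i ω))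
      atTop (nhds qp) := by
  have hpair : Pairwise fun i j => IndepFun (X i) (X j) P := fun i j hij => hindep.indepFun hij
  have hid : ∀ i, IdentDistrib (X i) (X 0) P P :=
    fun i => ⟨(hmeas i).aemeasurable, (hmeas 0).aemeasurable, hident i⟩
  have hcdf : ∀ᵐ ω ∂P, ∀ r : ℚ,
      Tendsto (fun m : ℕ => empCDF (fun i : Fin m => X i ω) r) atTop (𝓝 (F r)) := by
    refine ae_all_iff.2 fun r => ?_
    filter_upwards [ae_tendsto_card_filter_mem_div hpair hid (measurableSet_Iic (a := (r : ℝ)))]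
      with ω hω
    rw [hF]
    exact hω
  filter_upwards [hcdf] with ω hω
  exact tendsto_empQuantile_of_tendsto_empCDF (x := (X · ω)) hp hp1.le hqp hω
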